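/- arXiv:2501.08066 — 8 statements merged into one kernel-verified Lean document; each statement's English description precedes it below -/
import Mathlib

section
/- Let n ≥ 1, let A be a Hermitian n×n complex matrix, and let 0 < p < ∞. Then there exist a natural number K and Hermitian n×n complex matrices B_1, …, B_K such that |A ⊗ₖ 1 − 1 ⊗ₖ Aᵀ| = Σ_{k=1}^K |B_k ⊗ₖ 1 − 1 ⊗ₖ B_kᵀ|^p. (In finite dimensions, every 1-cost operator is a p-cost operator: C_1(H) ⊆ C_p(H).) -/
/-!
Diagonalize `A = U diag(λ) U*`. Then `A ⊗ₖ 1 - 1 ⊗ₖ Aᵀ = W diag(λ i - λ j) W*` with the unitary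
`W = U ⊗ₖ Ū`, and the same holds for every `B = U diag(μ) U*`, so by the functional calculus both
sides of the identity are `W diag(·) W*` and it reduces to the scalar identity
`|λ i - λ j| = ∑ k, |μ k i - μ k j| ^ p`. For that, sort `λ` and let `μ k` be the indicator of lying
above the `k`-th sorted value, scaled by the `p`-th root of the `k`-th gap: `|μ k i - μ k j| ^ p` is
the `k`-th gap if it lies between `λ i` and `λ j` and `0` otherwise, so the sum telescopes.
-/

open Kronecker Matrix
open scoped ComplexOrder

/-- `costOp p A` is the cost operator `|A ⊗ₖ 1 - 1 ⊗ₖ Aᵀ|^p`, where `|·|^p` is the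
functional calculus applied with `x ↦ |x| ^ p` (real rpow). -/
noncomputable def costOp {n : ℕ} (p : ℝ) (A : Matrix (Fin n) (Fin n) ℂ) :
    Matrix (Fin n × Fin n) (Fin n × Fin n) ℂ :=
  cfc (fun x : ℝ => |x| ^ p)
    (A ⊗ₖ (1 : Matrix (Fin n) (Fin n) ℂ) - (1 : Matrix (Fin n) (Fin n) ℂ) ⊗ₖ Aᵀ)

open Finset Polynomial Unitary

noncomputable def layer (F : ℕ → ℝ) (p : ℝ) (k m : ℕ) : ℝ :=
  if k < m then (F (k + 1) - F k) ^ p⁻¹ else 0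

lemma abs_layer_sub_rpow {F : ℕ → ℝ} (hF : Monotone F) {p : ℝ} (hp : 0 < p) {a b : ℕ}
    (hba : b ≤ a) (k : ℕ) :
    |layer F p k a - layer F p k b| ^ p = if k ∈ Ico b a then F (k + 1) - F k else 0 := by
  have hgap : 0 ≤ F (k + 1) - F k := sub_nonneg.2 (hF k.le_succ)
  by_cases hk : k ∈ Ico b a
  · obtain ⟨hbk, hka⟩ := mem_Ico.1 hk
    have hjump : layer F p k a - layer F p k b = (F (k + 1) - F k) ^ p⁻¹ := by
      simp [layer, hka, hbk.not_gt]
    rw [hjump, if_pos hk, abs_of_nonneg (Real.rpow_nonneg hgap _), ← Real.rpow_mul hgap,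
      inv_mul_cancel₀ hp.ne', Real.rpow_one]
  · have hflat : layer F p k a = layer F p k b := by
      simp only [mem_Ico, not_and_or, not_le, not_lt] at hk
      unfold layer
      split_ifs <;> first | rfl | omega
    rw [hflat, sub_self, abs_zero, Real.zero_rpow hp.ne', if_neg hk]

lemma Monotone.abs_sub_eq_sum_abs_layer_sub_rpow {F : ℕ → ℝ} (hF : Monotone F) {p : ℝ}
    (hp : 0 < p) {N a b : ℕ} (ha : a ≤ N) (hb : b ≤ N) :
    |F a - F b| = ∑ k ∈ range N, |layer F p k a - layer F p k b| ^ p := by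
  wlog hba : b ≤ a generalizing a b
  · rw [abs_sub_comm, this hb ha (le_of_not_ge hba)]
    simp only [abs_sub_comm]
  have hsub : Ico b a ⊆ range N := fun k hk => mem_range.2 ((mem_Ico.1 hk).2.trans_le ha)
  rw [abs_of_nonneg (sub_nonneg.2 (hF hba)), ← sum_Ico_sub F hba]
  simp only [abs_layer_sub_rpow hF hp hba, sum_ite_mem, inter_eq_right.2 hsub]

lemma exists_abs_sub_eq_sum_abs_sub_rpow {n : ℕ} (l : Fin n → ℝ) {p : ℝ} (hp : 0 < p) :
    ∃ μ : Fin n → Fin n → ℝ, ∀ i j, |l i - l j| = ∑ k, |μ k i - μ k j| ^ p := by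
  cases n with
  | zero => exact ⟨0, fun i => i.elim0⟩
  | succ m =>
    set σ := Tuple.sort l
    set F : ℕ → ℝ := fun r => l (σ (Fin.clamp r m))
    have hF : Monotone F := (Tuple.monotone_sort l).comp Fin.clamp_monotone
    have hFσ : ∀ i, F (σ.symm i) = l i := fun i => by
      simp only [F, Fin.clamp, Nat.min_eq_left (Nat.le_of_lt_succ (σ.symm i).2)]
      simp
    refine ⟨fun k i => layer F p k (σ.symm i), fun i j => ?_⟩
    rw [Fin.sum_univ_eq_sum_range
        (fun k => |layer F p k (σ.symm i) - layer F p k (σ.symm j)| ^ p),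
      ← hF.abs_sub_eq_sum_abs_layer_sub_rpow hp (σ.symm i).2.le (σ.symm j).2.le, hFσ, hFσ]

section FunctionalCalculus

variable {ι 𝕜 : Type*} [DecidableEq ι] [RCLike 𝕜]

lemma Matrix.isSelfAdjoint_diagonal_ofReal (d : ι → ℝ) :
    IsSelfAdjoint (diagonal (RCLike.ofReal ∘ d : ι → 𝕜)) :=
  isHermitian_diagonal_of_self_adjoint _ (by ext i; simp)

variable [Fintype ι]

lemma Matrix.cfc_diagonal (d : ι → ℝ) (f : ℝ → ℝ) :
    cfc f (diagonal (RCLike.ofReal ∘ d : ι → 𝕜)) = diagonal (RCLike.ofReal ∘ f ∘ d) := by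
  -- on the finite spectrum, `f` agrees with an interpolating polynomial
  set q := Lagrange.interpolate (univ.image d) id f
  have hq : ∀ i, q.eval (d i) = f (d i) := fun i =>
    Lagrange.eval_interpolate_at_node f (Set.injOn_id _) (mem_image_of_mem d (mem_univ i))
  calc cfc f (diagonal (RCLike.ofReal ∘ d : ι → 𝕜))
      = cfc q.eval (diagonal (RCLike.ofReal ∘ d : ι → 𝕜)) := by
        refine cfc_congr fun x hx => ?_
        rw [← spectrum.algebraMap_mem_iff 𝕜, spectrum_diagonal] at hx
        obtain ⟨i, hi⟩ := hx
        rw [show x = d i from RCLike.ofReal_injective hi.symm, hq]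
    _ = diagonalAlgHom ℝ (aeval (RCLike.ofReal ∘ d : ι → 𝕜) q) := by
        rw [cfc_polynomial q _ (isSelfAdjoint_diagonal_ofReal d), ← aeval_algHom_apply]
        rfl
    _ = diagonal (RCLike.ofReal ∘ f ∘ d) := by
        refine congrArg diagonal (funext fun i => ?_)
        simp [aeval_pi_apply₂, ← RCLike.algebraMap_eq_ofReal,
          aeval_algebraMap_apply_eq_algebraMap_eval, hq i]

lemma Matrix.cfc_conjStarAlgAut_diagonal (U : unitary (Matrix ι ι 𝕜)) (d : ι → ℝ)
    (f : ℝ → ℝ) :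
    cfc f (conjStarAlgAut 𝕜 _ U (diagonal (RCLike.ofReal ∘ d))) =
      conjStarAlgAut 𝕜 _ U (diagonal (RCLike.ofReal ∘ f ∘ d)) := by
  have hD := isSelfAdjoint_diagonal_ofReal (𝕜 := 𝕜) d
  have hcont : Continuous (conjStarAlgAut 𝕜 (Matrix ι ι 𝕜) U) :=
    (continuous_const.mul continuous_id).mul continuous_const
  rw [← cfc_diagonal, StarAlgHomClass.map_cfc (S := 𝕜) (conjStarAlgAut 𝕜 _ U) f _
    (finite_real_spectrum.continuousOn f) hcont hD (hD.map _)]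

lemma Matrix.isHermitian_conjStarAlgAut_diagonal (U : unitary (Matrix ι ι 𝕜)) (d : ι → ℝ) :
    (conjStarAlgAut 𝕜 _ U (diagonal (RCLike.ofReal ∘ d))).IsHermitian :=
  ((isSelfAdjoint_diagonal_ofReal d).map _).isHermitian

end FunctionalCalculus

section Kronecker

variable {ι R : Type*} [Fintype ι] [DecidableEq ι] [CommRing R] [StarRing R]

lemma Matrix.kronecker_one_sub_one_kronecker_transpose_conj {P : Matrix ι ι R}
    (hP : P * star P = 1) (D : Matrix ι ι R) :
    (P * D * star P) ⊗ₖ (1 : Matrix ι ι R) - (1 : Matrix ι ι R) ⊗ₖ (P * D * star P)ᵀ =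
      (P ⊗ₖ P.map star) * (D ⊗ₖ 1 - 1 ⊗ₖ Dᵀ) * star (P ⊗ₖ P.map star) := by
  have hstarT : (star P)ᵀ = P.map star := by ext; simp
  have hT : Pᵀ = star (P.map star) := by ext; simp
  have hbar : P.map star * star (P.map star) = 1 := by
    rw [← hT, ← hstarT, ← transpose_mul, hP, transpose_one]
  have hstarK : star (P ⊗ₖ P.map star) = star P ⊗ₖ star (P.map star) :=
    conjTranspose_kronecker _ _
  rw [hstarK, transpose_mul, transpose_mul, hstarT, hT, mul_sub, sub_mul,
    ← mul_kronecker_mul, ← mul_kronecker_mul, ← mul_kronecker_mul, ← mul_kronecker_mul]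
  simp only [mul_one, mul_assoc, hP, hbar]

def Matrix.kroneckerConj (U : unitary (Matrix ι ι R)) : unitary (Matrix (ι × ι) (ι × ι) R) :=
  ⟨U ⊗ₖ (U : Matrix ι ι R).map star,
    kronecker_mem_unitary U.2 (map_star_mem_unitaryGroup_iff.2 U.2)⟩

lemma Matrix.kronecker_one_sub_one_kronecker_transpose_conjStarAlgAut_diagonal
    (U : unitary (Matrix ι ι R)) (v : ι → R) :
    conjStarAlgAut R _ U (diagonal v) ⊗ₖ (1 : Matrix ι ι R) -
        (1 : Matrix ι ι R) ⊗ₖ (conjStarAlgAut R _ U (diagonal v))ᵀ =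
      conjStarAlgAut R _ (kroneckerConj U) (diagonal fun q => v q.1 - v q.2) := by
  rw [conjStarAlgAut_apply, kronecker_one_sub_one_kronecker_transpose_conj
    (Unitary.mul_star_self_of_mem U.2), diagonal_transpose, ← diagonal_one,
    diagonal_kronecker_diagonal, diagonal_kronecker_diagonal, diagonal_sub]
  simp [kroneckerConj]

lemma Matrix.cfc_kronecker_one_sub_one_kronecker_transpose {𝕜 : Type*} [RCLike 𝕜]
    (U : unitary (Matrix ι ι 𝕜)) (d : ι → ℝ) (f : ℝ → ℝ) :
    cfc f (conjStarAlgAut 𝕜 _ U (diagonal (RCLike.ofReal ∘ d)) ⊗ₖ (1 : Matrix ι ι 𝕜) -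
        (1 : Matrix ι ι 𝕜) ⊗ₖ (conjStarAlgAut 𝕜 _ U (diagonal (RCLike.ofReal ∘ d)))ᵀ) =
      conjStarAlgAut 𝕜 _ (kroneckerConj U)
        (diagonal (RCLike.ofReal ∘ fun q => f (d q.1 - d q.2))) := by
  have hdiff : (fun q : ι × ι => (RCLike.ofReal ∘ d) q.1 - (RCLike.ofReal ∘ d) q.2 : ι × ι → 𝕜) =
      RCLike.ofReal ∘ fun q => d q.1 - d q.2 := by
    ext; simp
  rw [kronecker_one_sub_one_kronecker_transpose_conjStarAlgAut_diagonal, hdiff]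
  exact cfc_conjStarAlgAut_diagonal (kroneckerConj U) (fun q => d q.1 - d q.2) f

end Kronecker

theorem one_cost_subset_p_cost_general (n : ℕ) (A : Matrix (Fin n) (Fin n) ℂ)
    (hA : A.IsHermitian) (p : ℝ) (hp : 0 < p) :
    ∃ (K : ℕ) (B : Fin K → Matrix (Fin n) (Fin n) ℂ),
      (∀ k, (B k).IsHermitian) ∧
      cfc (fun x : ℝ => |x|)
          (A ⊗ₖ (1 : Matrix (Fin n) (Fin n) ℂ) - (1 : Matrix (Fin n) (Fin n) ℂ) ⊗ₖ Aᵀ) =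
        ∑ k, costOp p (B k) := by
  obtain ⟨μ, hμ⟩ := exists_abs_sub_eq_sum_abs_sub_rpow hA.eigenvalues hp
  set U := hA.eigenvectorUnitary
  refine ⟨n, fun k => conjStarAlgAut ℂ _ U (diagonal (RCLike.ofReal ∘ μ k)),
    fun k => isHermitian_conjStarAlgAut_diagonal U (μ k), ?_⟩
  conv_lhs => rw [hA.spectral_theorem]
  simp only [costOp, cfc_kronecker_one_sub_one_kronecker_transpose, ← map_sum]
  congr 1
  ext i j
  simp [diagonal_apply, Matrix.sum_apply, hμ]

/-- In finite dimensions, every 1-cost operator is a `p`-cost operator: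
`C_1(H) ⊆ C_p(H)`. -/
theorem one_cost_subset_p_cost (n : ℕ) (hn : 1 ≤ n) (A : Matrix (Fin n) (Fin n) ℂ)
    (hA : A.IsHermitian) (p : ℝ) (hp : 0 < p) :
    ∃ (K : ℕ) (B : Fin K → Matrix (Fin n) (Fin n) ℂ),
      (∀ k, (B k).IsHermitian) ∧
      cfc (fun x : ℝ => |x|)
          (A ⊗ₖ (1 : Matrix (Fin n) (Fin n) ℂ) - (1 : Matrix (Fin n) (Fin n) ℂ) ⊗ₖ Aᵀ) =
        ∑ k, costOp p (B k) :=
  one_cost_subset_p_cost_general n A hA p hp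
end

section
/- Let Q be an n×n complex matrix that is an orthogonal projection (Q Hermitian with Q·Q = Q), let λ, μ ∈ ℝ, let p > 0, and set A = λ•Q + μ•(1 − Q). Then |A ⊗ₖ 1 − 1 ⊗ₖ Aᵀ|^p = |λ − μ|^p • ((1 − Q) ⊗ₖ Qᵀ + Q ⊗ₖ (1 − Q)ᵀ). -/
open Kronecker Matrix Polynomial
open scoped ComplexOrder

section aux

variable {n : ℕ}

lemma kron_sub_left (A B C : Matrix (Fin n) (Fin n) ℂ) :
    (A - B) ⊗ₖ C = A ⊗ₖ C - B ⊗ₖ C := by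
  ext ⟨i, j⟩ ⟨k, l⟩
  simp [sub_mul]

lemma kron_sub_right (A B C : Matrix (Fin n) (Fin n) ℂ) :
    A ⊗ₖ (B - C) = A ⊗ₖ B - A ⊗ₖ C := by
  ext ⟨i, j⟩ ⟨k, l⟩
  simp [mul_sub]

lemma kron_conjTranspose (A B : Matrix (Fin n) (Fin n) ℂ) :
    (A ⊗ₖ B)ᴴ = Aᴴ ⊗ₖ Bᴴ := by
  ext ⟨i, j⟩ ⟨k, l⟩
  simp [Matrix.conjTranspose_apply, mul_comm]

end aux

/-- For a two-level observable `A = λ•Q + μ•(1−Q)` built from an orthogonal projection `Q`,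
the `p`-cost operator is `|λ−μ|^p • ((1−Q) ⊗ₖ Qᵀ + Q ⊗ₖ (1−Q)ᵀ)`. -/
theorem cost_of_two_level {n : ℕ} (Q : Matrix (Fin n) (Fin n) ℂ)
    (hQ : Q.IsHermitian) (hQ2 : Q * Q = Q) (lam mu p : ℝ) (hp : 0 < p) :
    costOp p (lam • Q + mu • ((1 : Matrix (Fin n) (Fin n) ℂ) - Q)) =
      (|lam - mu| ^ p) •
        (((1 : Matrix (Fin n) (Fin n) ℂ) - Q) ⊗ₖ Qᵀ +
          Q ⊗ₖ ((1 : Matrix (Fin n) (Fin n) ℂ) - Q)ᵀ) := by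
  rcases Nat.eq_zero_or_pos n with hn | hn
  · subst hn
    exact Subsingleton.elim _ _
  haveI : Nonempty (Fin n) := ⟨⟨0, hn⟩⟩
  haveI : Nontrivial (Matrix (Fin n × Fin n) (Fin n × Fin n) ℂ) := by infer_instance
  set c : ℝ := lam - mu with hc
  set M : Matrix (Fin n × Fin n) (Fin n × Fin n) ℂ :=
    Q ⊗ₖ (1 : Matrix (Fin n) (Fin n) ℂ) - (1 : Matrix (Fin n) (Fin n) ℂ) ⊗ₖ Qᵀ with hM
  set R : Matrix (Fin n × Fin n) (Fin n × Fin n) ℂ :=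
    ((1 : Matrix (Fin n) (Fin n) ℂ) - Q) ⊗ₖ Qᵀ +
      Q ⊗ₖ ((1 : Matrix (Fin n) (Fin n) ℂ) - Q)ᵀ with hR
  have hQt2 : Qᵀ * Qᵀ = Qᵀ := by rw [← Matrix.transpose_mul, hQ2]
  -- A ⊗ 1 - 1 ⊗ Aᵀ = c • M
  have hA : ((lam • Q + mu • ((1 : Matrix (Fin n) (Fin n) ℂ) - Q)) ⊗ₖ
        (1 : Matrix (Fin n) (Fin n) ℂ) -
        (1 : Matrix (Fin n) (Fin n) ℂ) ⊗ₖ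
          (lam • Q + mu • ((1 : Matrix (Fin n) (Fin n) ℂ) - Q))ᵀ) = c • M := by
    simp only [hM, hc, Matrix.transpose_add, Matrix.transpose_smul, Matrix.transpose_sub,
      Matrix.transpose_one, Matrix.add_kronecker, Matrix.kronecker_add, Matrix.smul_kronecker,
      Matrix.kronecker_smul, kron_sub_left, kron_sub_right]
    module
  -- M * M = R
  have hM2 : M * M = R := by
    simp only [hM, hR, Matrix.sub_mul, Matrix.mul_sub, ← Matrix.mul_kronecker_mul,
      Matrix.one_mul, Matrix.mul_one, hQ2, hQt2, kron_sub_left, kron_sub_right,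
      Matrix.transpose_sub, Matrix.transpose_one]
    abel
  -- M * M * M = M
  have hM3 : M * M * M = M := by
    rw [hM2]
    simp only [hM, hR, Matrix.sub_mul, Matrix.mul_sub, Matrix.add_mul,
      ← Matrix.mul_kronecker_mul, Matrix.one_mul, Matrix.mul_one, hQ2, hQt2,
      kron_sub_left, kron_sub_right, Matrix.transpose_sub, Matrix.transpose_one]
    abel
  -- self-adjointness
  have hMsa : IsSelfAdjoint M := by
    show star M = M
    rw [Matrix.star_eq_conjTranspose]
    simp only [hM, Matrix.conjTranspose_sub, kron_conjTranspose,
      Matrix.conjTranspose_one, hQ.eq, hQ.transpose.eq]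
  have hDsa : IsSelfAdjoint (c • M) := by
    show star (c • M) = c • M
    rw [star_smul, star_trivial, hMsa.star_eq]
  rw [costOp, hA]
  rcases eq_or_ne c 0 with hc0 | hc0
  · rw [hc0]
    have h0 : cfc (fun x : ℝ => |x| ^ p) ((0 : ℝ) • M) = 0 := by
      rw [zero_smul]
      have : cfc (fun x : ℝ => |x| ^ p) (0 : Matrix (Fin n × Fin n) (Fin n × Fin n) ℂ)
          = cfc (fun _ : ℝ => (0 : ℝ)) (0 : Matrix (Fin n × Fin n) (Fin n × Fin n) ℂ) := by
        apply cfc_congr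
        intro x hx
        rw [spectrum.zero_eq] at hx
        simp only [Set.mem_singleton_iff] at hx
        simp [hx, Real.zero_rpow hp.ne']
      rw [this, cfc_const_zero]
    rw [h0, abs_zero, Real.zero_rpow hp.ne', zero_smul]
  -- main case
  · have hsm : c • M = ((c : ℂ)) • M := (algebraMap_smul ℂ c M).symm
    -- the spectrum of `c • M` is contained in `{0, c, -c}`
    have hspec : ∀ x ∈ spectrum ℝ (c • M), x = 0 ∨ x = c ∨ x = -c := by
      intro x hx
      have hx' : (x : ℂ) ∈ spectrum ℂ (c • M) := spectrum.algebraMap_mem ℂ hx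
      have hq : (aeval (c • M)) (X ^ 3 - C ((c : ℂ) ^ 2) * X) = 0 := by
        have hM3' : M ^ 3 = M := by rw [pow_succ, pow_two, hM3]
        simp only [map_sub, _root_.map_mul, aeval_X_pow, aeval_X, aeval_C]
        rw [hsm, _root_.smul_pow, hM3', ← Algebra.smul_def, smul_smul]
        rw [show ((c : ℂ)) ^ 3 = (c : ℂ) ^ 2 * (c : ℂ) by ring, sub_self]
      have hmem := spectrum.subset_polynomial_aeval (c • M) (X ^ 3 - C ((c : ℂ) ^ 2) * X)
        ⟨(x : ℂ), hx', rfl⟩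
      rw [hq, spectrum.zero_eq] at hmem
      simp only [eval_sub, eval_mul, eval_pow, eval_X, eval_C, Set.mem_singleton_iff] at hmem
      have hreal : x ^ 3 - c ^ 2 * x = 0 := by exact_mod_cast hmem
      have hfac : x * ((x - c) * (x + c)) = 0 := by linear_combination hreal
      rcases mul_eq_zero.mp hfac with h | h
      · exact Or.inl h
      rcases mul_eq_zero.mp h with h | h
      · exact Or.inr (Or.inl (by linarith [sub_eq_zero.mp h]))
      · exact Or.inr (Or.inr (by linarith))
    have hc2 : c ^ 2 ≠ 0 := pow_ne_zero 2 hc0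
    have step1 : cfc (fun x : ℝ => |x| ^ p) (c • M)
        = cfc (fun x : ℝ => (|c| ^ p / c ^ 2) • x ^ 2) (c • M) := by
      apply cfc_congr
      intro x hx
      rcases hspec x hx with h | h | h
      · simp [h, Real.zero_rpow hp.ne']
      · simp only [h, smul_eq_mul]
        rw [div_mul_cancel₀ _ hc2]
      · simp only [h, smul_eq_mul, abs_neg]
        rw [show (-c) ^ 2 = c ^ 2 by ring, div_mul_cancel₀ _ hc2]
    rw [step1, cfc_smul (|c| ^ p / c ^ 2) (fun x : ℝ => x ^ 2) (c • M),
      cfc_pow_id (c • M) 2 hDsa]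
    have hsq : (c • M) ^ 2 = (c ^ 2) • R := by
      rw [pow_two, smul_mul_smul_comm, hM2, pow_two]
    rw [hsq, smul_smul, div_mul_cancel₀ _ hc2]
end

section
/- Let p, p' > 0 and let A_1, …, A_K be Hermitian n×n complex matrices each having at most two distinct eigenvalues (i.e., for each k there exist an orthogonal projection Q_k and reals λ_k, μ_k with A_k = λ_k•Q_k + μ_k•(1 − Q_k)). Then there exist Hermitian n×n complex matrices B_1, …, B_K, each having at most two distinct eigenvalues, such that Σ_{k=1}^K |B_k ⊗ₖ 1 − 1 ⊗ₖ B_kᵀ|^{p'} = Σ_{k=1}^K |A_k ⊗ₖ 1 − 1 ⊗ₖ A_kᵀ|^p. (The set of cost operators generated by two-level observables is the same for all positive exponents: C_p^{(2)}(H) = C_{p'}^{(2)}(H).) -/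
open Kronecker Matrix
open scoped ComplexOrder

private lemma rpow_aux {x : ℝ} (hx : 0 < x) (t : ℝ) : x ^ (t - 2) * x ^ (2 : ℕ) = x ^ t := by
  rw [show x ^ (2 : ℕ) = x ^ ((2 : ℕ) : ℝ) from (Real.rpow_natCast x 2).symm,
    ← Real.rpow_add hx]
  norm_num

private lemma kron_conjT {n : ℕ} (A B : Matrix (Fin n) (Fin n) ℂ) :
    (A ⊗ₖ B)ᴴ = Aᴴ ⊗ₖ Bᴴ := by
  ext ⟨i, j⟩ ⟨k, l⟩
  simp [Matrix.conjTranspose_apply, mul_comm]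

/-- The key computation: the cost operator of a two-level observable is an explicit
scalar multiple of the square of `Q ⊗ₖ 1 - 1 ⊗ₖ Qᵀ`. -/
private lemma costOp_two_level {n : ℕ} (p : ℝ) (hp : 0 < p)
    (Q : Matrix (Fin n) (Fin n) ℂ) (hQ : Q.IsHermitian) (hQ2 : Q * Q = Q) (lam mu : ℝ) :
    costOp p (lam • Q + mu • ((1 : Matrix (Fin n) (Fin n) ℂ) - Q)) =
      (|lam - mu| ^ (p - 2) * (lam - mu) ^ 2) •
        (Q ⊗ₖ (1 : Matrix (Fin n) (Fin n) ℂ) - (1 : Matrix (Fin n) (Fin n) ℂ) ⊗ₖ Qᵀ) ^ 2 := by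
  set c : ℝ := lam - mu with hc
  set A : Matrix (Fin n) (Fin n) ℂ := lam • Q + mu • ((1 : Matrix (Fin n) (Fin n) ℂ) - Q) with hAdef
  set P : Matrix (Fin n × Fin n) (Fin n × Fin n) ℂ := Q ⊗ₖ (1 : Matrix (Fin n) (Fin n) ℂ) with hPdef
  set R : Matrix (Fin n × Fin n) (Fin n × Fin n) ℂ :=
    (1 : Matrix (Fin n) (Fin n) ℂ) ⊗ₖ Qᵀ with hRdef
  set D : Matrix (Fin n × Fin n) (Fin n × Fin n) ℂ := P - R with hDdef
  -- the operator inside the functional calculus is `c • D`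
  have hA' : A = mu • (1 : Matrix (Fin n) (Fin n) ℂ) + c • Q := by
    rw [hAdef, hc]; module
  have hM : A ⊗ₖ (1 : Matrix (Fin n) (Fin n) ℂ) - (1 : Matrix (Fin n) (Fin n) ℂ) ⊗ₖ Aᵀ
      = c • D := by
    rw [hA', hDdef, hPdef, hRdef]
    simp only [Matrix.add_kronecker, Matrix.kronecker_add, Matrix.smul_kronecker,
      Matrix.kronecker_smul, Matrix.transpose_add, Matrix.transpose_smul, Matrix.transpose_one]
    module
  -- algebraic facts about `P`, `R`, `D`
  have hP2 : P * P = P := by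
    rw [hPdef, ← Matrix.mul_kronecker_mul, hQ2, one_mul]
  have hQt2 : Qᵀ * Qᵀ = Qᵀ := by rw [← Matrix.transpose_mul, hQ2]
  have hR2 : R * R = R := by
    rw [hRdef, ← Matrix.mul_kronecker_mul, hQt2, one_mul]
  have hPR : P * R = R * P := by
    rw [hPdef, hRdef, ← Matrix.mul_kronecker_mul, ← Matrix.mul_kronecker_mul]
    rw [one_mul, mul_one, one_mul, mul_one]
  have hD3 : D * D * D = D := by
    have h1 : D * D = P + R - (P * R + P * R) := by
      rw [hDdef]
      rw [sub_mul, mul_sub, mul_sub, hP2, hR2, hPR]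
      abel
    rw [h1, hDdef]
    rw [sub_mul, add_mul, add_mul, mul_sub, mul_sub, mul_sub, hP2, hR2]
    have e2 : P * R * P = P * R := by rw [hPR, mul_assoc, hP2, ← hPR]
    have e3 : P * R * R = P * R := by rw [mul_assoc, hR2]
    have e4 : R * P = P * R := hPR.symm
    rw [e2, e3, e4]
    abel
  -- Hermitian-ness
  have hPh : P.IsHermitian := by
    show Pᴴ = P
    rw [hPdef, kron_conjT, hQ.eq, Matrix.conjTranspose_one]
  have hRh : R.IsHermitian := by
    show Rᴴ = R
    rw [hRdef, kron_conjT, hQ.transpose.eq, Matrix.conjTranspose_one]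
  have hDh : D.IsHermitian := hPh.sub hRh
  have hMsa : IsSelfAdjoint (c • D) := by
    have : (c • D).IsHermitian := by
      show (c • D)ᴴ = c • D
      rw [Matrix.conjTranspose_smul, hDh.eq]
      norm_num
    exact this.isSelfAdjoint
  -- spectrum of `c • D` consists of roots of `X^3 - c^2 X`
  have hD3' : D ^ 3 = D := by
    rw [pow_succ, pow_two]; exact hD3
  have hcube : (c • D) ^ 3 = (c ^ 2) • (c • D) := by
    rw [smul_pow, hD3', smul_smul, pow_succ]
  have hspec : ∀ x ∈ spectrum ℝ (c • D), x = 0 ∨ x ^ 2 = c ^ 2 := by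
    intro x hx
    have hmem := spectrum.subset_polynomial_aeval (c • D)
      (Polynomial.X ^ 3 - Polynomial.C (c ^ 2) * Polynomial.X) ⟨x, hx, rfl⟩
    have haev : Polynomial.aeval (c • D)
        (Polynomial.X ^ 3 - Polynomial.C (c ^ 2) * Polynomial.X) = 0 := by
      simp only [map_sub, _root_.map_mul, map_pow, Polynomial.aeval_C, Polynomial.aeval_X]
      rw [hcube, Algebra.smul_def, map_pow, sub_self]
    rw [haev] at hmem
    have hx0 : Polynomial.eval x (Polynomial.X ^ 3 - Polynomial.C (c ^ 2) * Polynomial.X)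
        = 0 := by
      by_contra h0
      rw [spectrum.mem_iff, sub_zero] at hmem
      exact hmem ((isUnit_iff_ne_zero.mpr h0).map (algebraMap ℝ _))
    simp only [Polynomial.eval_sub, Polynomial.eval_pow, Polynomial.eval_mul,
      Polynomial.eval_C, Polynomial.eval_X] at hx0
    have : x * (x ^ 2 - c ^ 2) = 0 := by linear_combination hx0
    rcases mul_eq_zero.mp this with h | h
    · exact Or.inl h
    · exact Or.inr (by linarith)
  -- replace `|x| ^ p` by the quadratic `|c|^(p-2) * x^2` on the spectrum
  have hcongr : cfc (fun x : ℝ => |x| ^ p) (c • D)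
      = cfc (fun x : ℝ => |c| ^ (p - 2) * x ^ 2) (c • D) := by
    apply cfc_congr
    intro x hx
    rcases hspec x hx with h0 | h2
    · subst h0
      simp [Real.zero_rpow hp.ne']
    · by_cases hc0 : c = 0
      · have hx2 : x ^ 2 = 0 := by rw [h2, hc0]; ring
        have hx0 : x = 0 := by
          exact pow_eq_zero_iff (two_ne_zero) |>.mp hx2
        subst hx0
        simp [Real.zero_rpow hp.ne']
      · have habs : |x| = |c| := by
          rw [← Real.sqrt_sq_eq_abs, ← Real.sqrt_sq_eq_abs, h2]
        have hcpos : (0 : ℝ) < |c| := abs_pos.mpr hc0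
        show |x| ^ p = |c| ^ (p - 2) * x ^ 2
        rw [habs, ← rpow_aux hcpos p]
        congr 1
        rw [← sq_abs x, habs]
  -- compute the quadratic functional calculus
  have hcalc : cfc (fun x : ℝ => |c| ^ (p - 2) * x ^ 2) (c • D)
      = (|c| ^ (p - 2) * c ^ 2) • D ^ 2 := by
    rw [cfc_const_mul (|c| ^ (p - 2)) (fun x : ℝ => x ^ 2) (c • D)
        (by fun_prop), cfc_pow_id (c • D) 2 hMsa, smul_pow, smul_smul]
  rw [costOp, hM, hcongr, hcalc]

private lemma scalar_aux (p p' : ℝ) (hp : 0 < p) (hp' : 0 < p') (c : ℝ) :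
    |(|c| ^ (p / p') - 0)| ^ (p' - 2) * (|c| ^ (p / p') - 0) ^ 2
      = |c| ^ (p - 2) * c ^ 2 := by
  rw [sub_zero]
  by_cases hc : c = 0
  · subst hc
    rw [abs_zero, Real.zero_rpow (by positivity : p / p' ≠ 0)]
    simp [Real.zero_rpow hp.ne']
  · have hcpos : (0 : ℝ) < |c| := abs_pos.mpr hc
    have hc'pos : (0 : ℝ) < |c| ^ (p / p') := Real.rpow_pos_of_pos hcpos _
    rw [abs_of_pos hc'pos, rpow_aux hc'pos p',
      ← Real.rpow_mul hcpos.le, div_mul_cancel₀ _ hp'.ne']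
    rw [show c ^ 2 = |c| ^ (2 : ℕ) by rw [sq_abs]]
    rw [rpow_aux hcpos p]

/-- The set of cost operators generated by two-level observables is the same for all positive
exponents: `C_p^{(2)}(H) = C_{p'}^{(2)}(H)`. -/
theorem two_level_cost_sets_eq {n : ℕ} (p p' : ℝ) (hp : 0 < p) (hp' : 0 < p') (K : ℕ)
    (A : Fin K → Matrix (Fin n) (Fin n) ℂ)
    (hA : ∀ k, ∃ (Q : Matrix (Fin n) (Fin n) ℂ) (lam mu : ℝ),
      Q.IsHermitian ∧ Q * Q = Q ∧ A k = lam • Q + mu • ((1 : Matrix (Fin n) (Fin n) ℂ) - Q)) :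
    ∃ B : Fin K → Matrix (Fin n) (Fin n) ℂ,
      (∀ k, ∃ (Q : Matrix (Fin n) (Fin n) ℂ) (lam mu : ℝ),
        Q.IsHermitian ∧ Q * Q = Q ∧
          B k = lam • Q + mu • ((1 : Matrix (Fin n) (Fin n) ℂ) - Q)) ∧
      ∑ k, costOp p' (B k) = ∑ k, costOp p (A k) := by
  choose Q lam mu hQherm hQproj hAeq using hA
  refine ⟨fun k => (|lam k - mu k| ^ (p / p')) • Q k +
      (0 : ℝ) • ((1 : Matrix (Fin n) (Fin n) ℂ) - Q k), fun k =>
      ⟨Q k, |lam k - mu k| ^ (p / p'), 0, hQherm k, hQproj k, rfl⟩, ?_⟩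
  refine Finset.sum_congr rfl fun k _ => ?_
  rw [hAeq k, costOp_two_level p hp (Q k) (hQherm k) (hQproj k),
    costOp_two_level p' hp' (Q k) (hQherm k) (hQproj k), scalar_aux p p' hp hp']
end

section
/- Let p, p' > 0 and let A_1, …, A_K be arbitrary Hermitian 2×2 complex matrices. Then there exist a natural number J and Hermitian 2×2 complex matrices B_1, …, B_J such that Σ_{j=1}^J |B_j ⊗ₖ 1 − 1 ⊗ₖ B_jᵀ|^{p'} = Σ_{k=1}^K |A_k ⊗ₖ 1 − 1 ⊗ₖ A_kᵀ|^p. (On ℂ² the sets of all possible p-cost operators coincide for all finite p > 0: C_p(ℂ²) = C_{p'}(ℂ²).) -/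
open Kronecker Matrix
open scoped ComplexOrder

private lemma cube_identity (A : Matrix (Fin 2) (Fin 2) ℂ) :
    (A ⊗ₖ (1 : Matrix (Fin 2) (Fin 2) ℂ) - (1 : Matrix (Fin 2) (Fin 2) ℂ) ⊗ₖ Aᵀ) ^ 3 =
      (A.trace ^ 2 - 4 * A.det) •
        (A ⊗ₖ (1 : Matrix (Fin 2) (Fin 2) ℂ) - (1 : Matrix (Fin 2) (Fin 2) ℂ) ⊗ₖ Aᵀ) := by
  ext ⟨i, j⟩ ⟨k, l⟩
  simp only [pow_succ, pow_zero, one_mul, Matrix.mul_apply, Fintype.sum_prod_type,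
    Matrix.sub_apply, Matrix.kroneckerMap_apply, Matrix.transpose_apply, Matrix.smul_apply,
    Matrix.trace_fin_two, Matrix.det_fin_two, Matrix.one_apply, smul_eq_mul, Fin.sum_univ_two]
  fin_cases i <;> fin_cases j <;> fin_cases k <;> fin_cases l <;> simp <;> ring

private lemma herm_M {A : Matrix (Fin 2) (Fin 2) ℂ} (hA : A.IsHermitian) :
    (A ⊗ₖ (1 : Matrix (Fin 2) (Fin 2) ℂ) - (1 : Matrix (Fin 2) (Fin 2) ℂ) ⊗ₖ Aᵀ).IsHermitian := by
  have h1 : (A ⊗ₖ (1 : Matrix (Fin 2) (Fin 2) ℂ)).IsHermitian := by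
    ext ⟨i, j⟩ ⟨k, l⟩
    simp only [Matrix.conjTranspose_apply, Matrix.kroneckerMap_apply, Matrix.one_apply]
    rw [star_mul']
    rw [← hA.apply k i]
    by_cases h : l = j
    · subst h; simp
    · simp [h, Ne.symm h]
  have h2 : ((1 : Matrix (Fin 2) (Fin 2) ℂ) ⊗ₖ Aᵀ).IsHermitian := by
    ext ⟨i, j⟩ ⟨k, l⟩
    simp only [Matrix.conjTranspose_apply, Matrix.kroneckerMap_apply, Matrix.one_apply,
      Matrix.transpose_apply]
    rw [star_mul']
    rw [← hA.apply j l]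
    by_cases h : k = i
    · subst h; simp
    · simp [h, Ne.symm h]
  exact h1.sub h2

private lemma exists_d (A : Matrix (Fin 2) (Fin 2) ℂ) (hA : A.IsHermitian) :
    ∃ d : ℝ, 0 ≤ d ∧ A.trace ^ 2 - 4 * A.det = (((d ^ 2 : ℝ)) : ℂ) := by
  have h00 := hA.apply 0 0
  have h11 := hA.apply 1 1
  have h10 := hA.apply 1 0
  have hr0 : (0:ℝ) ≤ ((A 0 0).re - (A 1 1).re) ^ 2 + 4 * Complex.normSq (A 0 1) :=
    add_nonneg (sq_nonneg _) (mul_nonneg (by norm_num) (Complex.normSq_nonneg _))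
  refine ⟨Real.sqrt (((A 0 0).re - (A 1 1).re) ^ 2 + 4 * Complex.normSq (A 0 1)),
    Real.sqrt_nonneg _, ?_⟩
  have ea : ((A 0 0).re : ℂ) = A 0 0 := Complex.conj_eq_iff_re.mp h00
  have ee : ((A 1 1).re : ℂ) = A 1 1 := Complex.conj_eq_iff_re.mp h11
  have eb : A 1 0 = (starRingEnd ℂ) (A 0 1) := h10.symm
  have hmul : A 0 1 * A 1 0 = (Complex.normSq (A 0 1) : ℂ) := by
    rw [eb, Complex.mul_conj]
  rw [Matrix.trace_fin_two, Matrix.det_fin_two, hmul, Real.sq_sqrt hr0, ← ea, ← ee]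
  simp only [Complex.ofReal_re]
  push_cast
  ring

private lemma key (p p' : ℝ) (hp : 0 < p) (hp' : 0 < p')
    (A : Matrix (Fin 2) (Fin 2) ℂ) (hA : A.IsHermitian) :
    ∃ B : Matrix (Fin 2) (Fin 2) ℂ, B.IsHermitian ∧ costOp p' B = costOp p A := by
  obtain ⟨d, hd0, hd⟩ := exists_d A hA
  set M : Matrix (Fin 2 × Fin 2) (Fin 2 × Fin 2) ℂ :=
    A ⊗ₖ (1 : Matrix (Fin 2) (Fin 2) ℂ) - (1 : Matrix (Fin 2) (Fin 2) ℂ) ⊗ₖ Aᵀ with hMdef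
  have hM : M.IsHermitian := herm_M hA
  have hMsa : IsSelfAdjoint M := hM.isSelfAdjoint
  have hcube : M ^ 3 = (d ^ 2 : ℝ) • M := by
    have h := cube_identity A
    rw [hd] at h
    rw [hMdef, h, ← algebraMap_smul (R := ℝ) ℂ (d ^ 2)
      (A ⊗ₖ (1 : Matrix (Fin 2) (Fin 2) ℂ) - (1 : Matrix (Fin 2) (Fin 2) ℂ) ⊗ₖ Aᵀ)]
    rfl
  have hspec : ∀ x ∈ spectrum ℝ M, x = 0 ∨ x = d ∨ x = -d := by
    intro x hx
    have h0 : (Polynomial.aeval M)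
        (Polynomial.X ^ 3 - Polynomial.C (d ^ 2) * Polynomial.X : Polynomial ℝ) = 0 := by
      simp only [map_sub, _root_.map_mul, Polynomial.aeval_X_pow, Polynomial.aeval_C,
        Polynomial.aeval_X]
      rw [hcube, ← Algebra.smul_def, sub_self]
    have hmem := spectrum.subset_polynomial_aeval M
      (Polynomial.X ^ 3 - Polynomial.C (d ^ 2) * Polynomial.X : Polynomial ℝ) ⟨x, hx, rfl⟩
    rw [h0, spectrum.zero_eq] at hmem
    simp only [Set.mem_singleton_iff, Polynomial.eval_sub, Polynomial.eval_pow,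
      Polynomial.eval_X, Polynomial.eval_mul, Polynomial.eval_C] at hmem
    have hfac : x * ((x - d) * (x + d)) = 0 := by linear_combination hmem
    rcases mul_eq_zero.mp hfac with h | h
    · exact Or.inl h
    · rcases mul_eq_zero.mp h with h | h
      · exact Or.inr (Or.inl (by linarith))
      · exact Or.inr (Or.inr (by linarith))
  set c : ℝ := d ^ ((p - p') / p') with hc
  have hc0 : 0 ≤ c := Real.rpow_nonneg hd0 _
  have hval : ∀ x : ℝ, x = 0 ∨ x = d ∨ x = -d → |c * x| ^ p' = |x| ^ p := by
    have hcd : |c * d| ^ p' = |d| ^ p := by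
      rcases eq_or_lt_of_le hd0 with h0 | hdpos
      · rw [← h0, mul_zero, abs_zero, Real.zero_rpow hp'.ne', Real.zero_rpow hp.ne']
      · have h1 : |c * d| ^ p' = c ^ p' * d ^ p' := by
          rw [abs_of_nonneg (mul_nonneg hc0 hd0), Real.mul_rpow hc0 hd0]
        have h2 : c ^ p' = d ^ (p - p') := by
          rw [hc, ← Real.rpow_mul hd0, div_mul_cancel₀ _ hp'.ne']
        rw [h1, h2, ← Real.rpow_add hdpos, sub_add_cancel, abs_of_pos hdpos]
    rintro x (rfl | rfl | rfl)
    · rw [mul_zero, abs_zero, Real.zero_rpow hp'.ne', Real.zero_rpow hp.ne']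
    · exact hcd
    · rw [mul_neg, abs_neg, abs_neg]; exact hcd
  refine ⟨c • A, ?_, ?_⟩
  · rw [Matrix.IsHermitian, Matrix.conjTranspose_smul, star_trivial, hA.eq]
  · have hcont : Continuous fun x : ℝ => |x| ^ p' :=
      continuous_abs.rpow_const fun x => Or.inr hp'.le
    have hsm : (c • A) ⊗ₖ (1 : Matrix (Fin 2) (Fin 2) ℂ)
        - (1 : Matrix (Fin 2) (Fin 2) ℂ) ⊗ₖ (c • A)ᵀ = c • M := by
      rw [hMdef, Matrix.transpose_smul, Matrix.smul_kronecker, Matrix.kronecker_smul, smul_sub]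
    unfold costOp
    rw [hsm, ← cfc_comp_const_mul c (fun x : ℝ => |x| ^ p') M hcont.continuousOn hMsa]
    exact cfc_congr fun x hx => hval x (hspec x hx)

/-- On `ℂ²` the sets of all possible `p`-cost operators coincide for all finite `p > 0`:
`C_p(ℂ²) = C_{p'}(ℂ²)`. -/
theorem qubit_cost_sets_eq (p p' : ℝ) (hp : 0 < p) (hp' : 0 < p') (K : ℕ)
    (A : Fin K → Matrix (Fin 2) (Fin 2) ℂ) (hA : ∀ k, (A k).IsHermitian) :
    ∃ (J : ℕ) (B : Fin J → Matrix (Fin 2) (Fin 2) ℂ),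
      (∀ j, (B j).IsHermitian) ∧
      ∑ j, costOp p' (B j) = ∑ k, costOp p (A k) := by
  choose B hB1 hB2 using fun k => key p p' hp hp' (A k) (hA k)
  exact ⟨K, B, hB1, by simp [hB2]⟩
end

section
/- Let p, p' > 0, let A be a Hermitian n×n complex matrix, and let B_1, …, B_K be Hermitian n×n complex matrices such that |A ⊗ₖ 1 − 1 ⊗ₖ Aᵀ|^p = Σ_{k=1}^K |B_k ⊗ₖ 1 − 1 ⊗ₖ B_kᵀ|^{p'}. Then A commutes with B_k (A · B_k = B_k · A) for every k ∈ {1, …, K}. -/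
/-!
The vectorization of `Xᵀ` lies in the kernel of `A ⊗ₖ 1 - 1 ⊗ₖ Aᵀ` exactly when `X` commutes
with `A`. For a Hermitian `M` and `p ≠ 0`, the matrices `M` and `|M|^p` have the same kernel,
each being a functional-calculus multiple of the other; and a sum of positive semidefinite
matrices annihilates a vector only if every summand does. Hence `vec Aᵀ`, killed by
`A ⊗ₖ 1 - 1 ⊗ₖ Aᵀ`, is killed by `|A ⊗ₖ 1 - 1 ⊗ₖ Aᵀ|^p`, so by every `|B_k ⊗ₖ 1 - 1 ⊗ₖ B_kᵀ|^p'`,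
so by every `B_k ⊗ₖ 1 - 1 ⊗ₖ B_kᵀ`: that is, every `B_k` commutes with `A`.
-/

open Kronecker Matrix
open scoped ComplexOrder

namespace Matrix

variable {m : Type*}

theorem PosSemidef.mulVec_eq_zero_of_sum_mulVec_eq_zero [Fintype m] {𝕜 ι : Type*} [RCLike 𝕜]
    {s : Finset ι} {P : ι → Matrix m m 𝕜} (hP : ∀ i ∈ s, (P i).PosSemidef) {v : m → 𝕜}
    (hv : (∑ i ∈ s, P i) *ᵥ v = 0) {i : ι} (hi : i ∈ s) : P i *ᵥ v = 0 := by
  have hquad : ∑ j ∈ s, star v ⬝ᵥ (P j *ᵥ v) = 0 := by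
    rw [← dotProduct_sum, ← sum_mulVec, hv, dotProduct_zero]
  rw [Finset.sum_eq_zero_iff_of_nonneg fun j hj => (hP j hj).dotProduct_mulVec_nonneg v] at hquad
  exact ((hP i hi).dotProduct_mulVec_zero_iff v).1 (hquad i hi)

theorem kronecker_one_sub_one_kronecker_transpose_mulVec_vec [Fintype m] [DecidableEq m]
    {R : Type*} [CommRing R] (A X : Matrix m m R) :
    (A ⊗ₖ (1 : Matrix m m R) - (1 : Matrix m m R) ⊗ₖ Aᵀ) *ᵥ vec X = vec (X * Aᵀ - Aᵀ * X) := by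
  rw [sub_mulVec, kronecker_mulVec_vec, kronecker_mulVec_vec, vec_sub, one_mul,
    transpose_one, mul_one]

theorem commute_iff_kronecker_one_sub_one_kronecker_transpose_mulVec_eq_zero [Fintype m]
    [DecidableEq m] {R : Type*} [CommRing R] (A X : Matrix m m R) :
    Commute A X ↔
      (A ⊗ₖ (1 : Matrix m m R) - (1 : Matrix m m R) ⊗ₖ Aᵀ) *ᵥ vec Xᵀ = 0 := by
  rw [kronecker_one_sub_one_kronecker_transpose_mulVec_vec, vec_eq_zero_iff, ← transpose_mul,
    ← transpose_mul, ← transpose_sub, transpose_eq_zero, sub_eq_zero]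
  rfl

theorem IsHermitian.kronecker_one_sub_one_kronecker_transpose [DecidableEq m] {R : Type*}
    [CommRing R] [StarRing R] {A : Matrix m m R} (hA : A.IsHermitian) :
    (A ⊗ₖ (1 : Matrix m m R) - (1 : Matrix m m R) ⊗ₖ Aᵀ).IsHermitian := by
  simp only [IsHermitian, conjTranspose_sub, conjTranspose_kronecker, conjTranspose_one,
    hA.eq, hA.transpose.eq]

theorem cfc_mulVec_eq_zero_of_cfc_mulVec_eq_zero [Fintype m] [DecidableEq m] {𝕜 : Type*}
    [RCLike 𝕜] {f g : ℝ → ℝ} {M : Matrix m m 𝕜}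
    (hfg : ∀ x ∈ spectrum ℝ M, f x = 0 → g x = 0) {v : m → 𝕜} (hv : cfc f M *ᵥ v = 0) :
    cfc g M *ᵥ v = 0 := by
  have hfactor : cfc g M = cfc (fun x => g x / f x) M * cfc f M := by
    rw [← cfc_mul _ _ M (M.finite_real_spectrum.continuousOn _)
      (M.finite_real_spectrum.continuousOn _)]
    refine cfc_congr fun x hx => ?_
    by_cases hfx : f x = 0
    · simp [hfx, hfg x hx hfx]
    · simp [div_mul_cancel₀ _ hfx]
  rw [hfactor, ← mulVec_mulVec, hv, mulVec_zero]

end Matrix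

section costOp

variable {n : ℕ} {A : Matrix (Fin n) (Fin n) ℂ} {v : Fin n × Fin n → ℂ}

open scoped MatrixOrder in
theorem costOp_posSemidef (p : ℝ) (A : Matrix (Fin n) (Fin n) ℂ) : (costOp p A).PosSemidef :=
  nonneg_iff_posSemidef.1 (cfc_nonneg fun x _ => by positivity)

theorem costOp_mulVec_eq_zero_of_kronecker_mulVec_eq_zero {p : ℝ} (hp : p ≠ 0)
    (hA : A.IsHermitian)
    (hv : (A ⊗ₖ (1 : Matrix (Fin n) (Fin n) ℂ) - (1 : Matrix (Fin n) (Fin n) ℂ) ⊗ₖ Aᵀ) *ᵥ v = 0) :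
    costOp p A *ᵥ v = 0 := by
  rw [← cfc_id' ℝ _ hA.kronecker_one_sub_one_kronecker_transpose] at hv
  refine cfc_mulVec_eq_zero_of_cfc_mulVec_eq_zero (fun x _ hx => ?_) hv
  simp [hx, Real.zero_rpow hp]

theorem kronecker_mulVec_eq_zero_of_costOp_mulVec_eq_zero {p : ℝ} (hA : A.IsHermitian)
    (hv : costOp p A *ᵥ v = 0) :
    (A ⊗ₖ (1 : Matrix (Fin n) (Fin n) ℂ) - (1 : Matrix (Fin n) (Fin n) ℂ) ⊗ₖ Aᵀ) *ᵥ v = 0 := by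
  rw [← cfc_id' ℝ _ hA.kronecker_one_sub_one_kronecker_transpose]
  refine cfc_mulVec_eq_zero_of_cfc_mulVec_eq_zero (fun x _ hx => ?_) hv
  exact abs_eq_zero.1 ((Real.rpow_eq_zero_iff_of_nonneg (abs_nonneg x)).1 hx).1

end costOp

theorem commutes_of_cost_decomposition_general {n : ℕ} (p p' : ℝ) (hp : 0 < p)
    (K : ℕ) (A : Matrix (Fin n) (Fin n) ℂ) (hA : A.IsHermitian)
    (B : Fin K → Matrix (Fin n) (Fin n) ℂ) (hB : ∀ k, (B k).IsHermitian)
    (h : costOp p A = ∑ k, costOp p' (B k)) :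
    ∀ k, A * B k = B k * A := by
  intro k
  have hA_vec : costOp p A *ᵥ vec Aᵀ = 0 :=
    costOp_mulVec_eq_zero_of_kronecker_mulVec_eq_zero hp.ne' hA
      ((commute_iff_kronecker_one_sub_one_kronecker_transpose_mulVec_eq_zero A A).1 (.refl A))
  have hB_vec : costOp p' (B k) *ᵥ vec Aᵀ = 0 :=
    PosSemidef.mulVec_eq_zero_of_sum_mulVec_eq_zero (fun j _ => costOp_posSemidef p' (B j))
      (h ▸ hA_vec) (Finset.mem_univ k)
  exact ((commute_iff_kronecker_one_sub_one_kronecker_transpose_mulVec_eq_zero (B k) A).2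
    (kronecker_mulVec_eq_zero_of_costOp_mulVec_eq_zero (hB k) hB_vec)).symm.eq

/-- If the `p`-cost operator of `A` decomposes as a sum of `p'`-cost operators of `B_k`,
then `A` commutes with every `B_k`. -/
theorem commutes_of_cost_decomposition {n : ℕ} (p p' : ℝ) (hp : 0 < p) (hp' : 0 < p')
    (K : ℕ) (A : Matrix (Fin n) (Fin n) ℂ) (hA : A.IsHermitian)
    (B : Fin K → Matrix (Fin n) (Fin n) ℂ) (hB : ∀ k, (B k).IsHermitian)
    (h : costOp p A = ∑ k, costOp p' (B k)) :
    ∀ k, A * B k = B k * A :=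
  commutes_of_cost_decomposition_general p p' hp K A hA B hB h
end

section
/- Fix n ≥ 1 and finite p, p' > 0. The following are equivalent: (1) for every Hermitian n×n complex matrix A there exist finitely many Hermitian n×n matrices B_1, …, B_r such that |A ⊗ₖ 1 − 1 ⊗ₖ Aᵀ|^p = Σ_{k=1}^r |B_k ⊗ₖ 1 − 1 ⊗ₖ B_kᵀ|^{p'}; (2) for every Hermitian n×n complex matrix A that is not a real scalar multiple of the identity, there exist finitely many Hermitian n×n matrices B_1, …, B_r and a Hermitian n×n matrix A' whose spectrum has strictly smaller cardinality than the spectrum of A, such that |A ⊗ₖ 1 − 1 ⊗ₖ Aᵀ|^p − Σ_{k=1}^r |B_k ⊗ₖ 1 − 1 ⊗ₖ B_kᵀ|^{p'} = |A' ⊗ₖ 1 − 1 ⊗ₖ A'ᵀ|^p. -/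
open Kronecker Matrix
open scoped ComplexOrder

lemma IsSelfAdjoint.exists_eq_algebraMap_of_subsingleton_spectrum {A : Type*} [Ring A]
    [StarRing A] [Algebra ℝ A] [TopologicalSpace A]
    [ContinuousFunctionalCalculus ℝ A IsSelfAdjoint] {a : A} (ha : IsSelfAdjoint a)
    (h : (spectrum ℝ a).Subsingleton) : ∃ c : ℝ, a = algebraMap ℝ A c := by
  obtain hempty | ⟨c, hc⟩ := h.eq_empty_or_singleton
  · refine ⟨0, ?_⟩
    rw [← cfc_id ℝ a, ← cfc_const (0 : ℝ) a]
    exact cfc_congr (by simp [hempty])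
  · refine ⟨c, ?_⟩
    rw [← cfc_id ℝ a, ← cfc_const c a]
    exact cfc_congr fun x hx => by simpa [hc] using hx

lemma Matrix.IsHermitian.one_lt_ncard_spectrum {n : Type*} [Fintype n] [DecidableEq n]
    {A : Matrix n n ℂ} (hA : A.IsHermitian) (h : ¬ ∃ c : ℝ, A = c • (1 : Matrix n n ℂ)) :
    1 < (spectrum ℝ A).ncard := by
  have : Finite (spectrum ℝ A) := A.finite_real_spectrum
  by_contra! hle
  obtain ⟨c, hc⟩ := hA.isSelfAdjoint.exists_eq_algebraMap_of_subsingleton_spectrum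
    (Set.ncard_le_one_iff_subsingleton.mp hle)
  exact h ⟨c, by rw [hc, Algebra.algebraMap_eq_smul_one]⟩

lemma spectrum.zero_subset_singleton {R A : Type*} [Field R] [Ring A] [Algebra R A] :
    spectrum R (0 : A) ⊆ {0} := by
  intro r hr
  by_contra hr0
  exact spectrum.mem_iff.mp hr (by simpa using (isUnit_iff_ne_zero.mpr hr0).map (algebraMap R A))

lemma Matrix.ncard_spectrum_zero_le_one {n : Type*} [Fintype n] [DecidableEq n] :
    (spectrum ℝ (0 : Matrix n n ℂ)).ncard ≤ 1 := by
  have : Finite (spectrum ℝ (0 : Matrix n n ℂ)) := (0 : Matrix n n ℂ).finite_real_spectrum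
  exact Set.ncard_le_one_iff_subsingleton.mpr
    (Set.subsingleton_singleton.anti spectrum.zero_subset_singleton)

lemma costOp_smul_one {n : ℕ} {p : ℝ} (hp : 0 < p) (c : ℝ) :
    costOp p (c • (1 : Matrix (Fin n) (Fin n) ℂ)) = 0 := by
  rw [costOp, transpose_smul, transpose_one, smul_kronecker, kronecker_smul, sub_self,
    cfc_apply_zero, abs_zero, Real.zero_rpow hp.ne', map_zero]

def CostDecomposable {n : ℕ} (p p' : ℝ) (A : Matrix (Fin n) (Fin n) ℂ) : Prop :=
  ∃ (r : ℕ) (B : Fin r → Matrix (Fin n) (Fin n) ℂ),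
    (∀ k, (B k).IsHermitian) ∧ costOp p A = ∑ k, costOp p' (B k)

lemma costDecomposable_smul_one {n : ℕ} {p : ℝ} (p' : ℝ) (hp : 0 < p) (c : ℝ) :
    CostDecomposable p p' (c • (1 : Matrix (Fin n) (Fin n) ℂ)) :=
  ⟨0, Fin.elim0, fun k => k.elim0,
    by rw [costOp_smul_one hp, Finset.univ_eq_empty, Finset.sum_empty]⟩

lemma CostDecomposable.of_sub_sum {n r : ℕ} {p p' : ℝ} {A A' : Matrix (Fin n) (Fin n) ℂ}
    {B : Fin r → Matrix (Fin n) (Fin n) ℂ} (hB : ∀ k, (B k).IsHermitian)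
    (hA' : CostDecomposable p p' A') (h : costOp p A - ∑ k, costOp p' (B k) = costOp p A') :
    CostDecomposable p p' A := by
  obtain ⟨s, C, hC, hA'C⟩ := hA'
  refine ⟨r + s, Fin.append B C, Fin.addCases (by simpa using hB) (by simpa using hC), ?_⟩
  simp only [Fin.sum_univ_add, Fin.append_left, Fin.append_right, ← hA'C, ← h]
  abel

lemma costDecomposable_of_spectral_reduction {n : ℕ} {p p' : ℝ} (hp : 0 < p)
    (hstep : ∀ A : Matrix (Fin n) (Fin n) ℂ, A.IsHermitian →
      (¬ ∃ c : ℝ, A = c • (1 : Matrix (Fin n) (Fin n) ℂ)) →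
      ∃ (r : ℕ) (B : Fin r → Matrix (Fin n) (Fin n) ℂ) (A' : Matrix (Fin n) (Fin n) ℂ),
        (∀ k, (B k).IsHermitian) ∧ A'.IsHermitian ∧
        (spectrum ℝ A').ncard < (spectrum ℝ A).ncard ∧
        costOp p A - ∑ k, costOp p' (B k) = costOp p A')
    {A : Matrix (Fin n) (Fin n) ℂ} (hA : A.IsHermitian) : CostDecomposable p p' A := by
  induction hm : (spectrum ℝ A).ncard using Nat.strong_induction_on generalizing A with
  | _ m ih =>
    by_cases hscalar : ∃ c : ℝ, A = c • (1 : Matrix (Fin n) (Fin n) ℂ)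
    · obtain ⟨c, rfl⟩ := hscalar
      exact costDecomposable_smul_one p' hp c
    · obtain ⟨r, B, A', hB, hA', hlt, h⟩ := hstep A hA hscalar
      exact (ih _ (hm ▸ hlt) hA' rfl).of_sub_sum hB h

theorem cost_decomposition_iff_spectral_reduction_general {n : ℕ} (p p' : ℝ)
    (hp : 0 < p) :
    (∀ A : Matrix (Fin n) (Fin n) ℂ, A.IsHermitian →
      ∃ (r : ℕ) (B : Fin r → Matrix (Fin n) (Fin n) ℂ),
        (∀ k, (B k).IsHermitian) ∧ costOp p A = ∑ k, costOp p' (B k)) ↔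
    (∀ A : Matrix (Fin n) (Fin n) ℂ, A.IsHermitian →
      (¬ ∃ c : ℝ, A = c • (1 : Matrix (Fin n) (Fin n) ℂ)) →
      ∃ (r : ℕ) (B : Fin r → Matrix (Fin n) (Fin n) ℂ)
        (A' : Matrix (Fin n) (Fin n) ℂ),
        (∀ k, (B k).IsHermitian) ∧ A'.IsHermitian ∧
        (spectrum ℝ A').ncard < (spectrum ℝ A).ncard ∧
        costOp p A - ∑ k, costOp p' (B k) = costOp p A') := by
  refine ⟨fun hdec A hA hscalar => ?_,
    fun hstep A hA => costDecomposable_of_spectral_reduction hp hstep hA⟩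
  obtain ⟨r, B, hB, h⟩ := hdec A hA
  have hzero : costOp p (0 : Matrix (Fin n) (Fin n) ℂ) = 0 := by
    simpa using costOp_smul_one (n := n) hp 0
  exact ⟨r, B, 0, hB, isHermitian_zero,
    ncard_spectrum_zero_le_one.trans_lt (hA.one_lt_ncard_spectrum hscalar),
    by rw [h, sub_self, hzero]⟩

/-- Decomposability of all `p`-cost operators into `p'`-cost operators is equivalent to the
possibility of a spectral-reduction step for every non-scalar Hermitian matrix. -/
theorem cost_decomposition_iff_spectral_reduction {n : ℕ} (hn : 1 ≤ n) (p p' : ℝ)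
    (hp : 0 < p) (hp' : 0 < p') :
    (∀ A : Matrix (Fin n) (Fin n) ℂ, A.IsHermitian →
      ∃ (r : ℕ) (B : Fin r → Matrix (Fin n) (Fin n) ℂ),
        (∀ k, (B k).IsHermitian) ∧ costOp p A = ∑ k, costOp p' (B k)) ↔
    (∀ A : Matrix (Fin n) (Fin n) ℂ, A.IsHermitian →
      (¬ ∃ c : ℝ, A = c • (1 : Matrix (Fin n) (Fin n) ℂ)) →
      ∃ (r : ℕ) (B : Fin r → Matrix (Fin n) (Fin n) ℂ)
        (A' : Matrix (Fin n) (Fin n) ℂ),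
        (∀ k, (B k).IsHermitian) ∧ A'.IsHermitian ∧
        (spectrum ℝ A').ncard < (spectrum ℝ A).ncard ∧
        costOp p A - ∑ k, costOp p' (B k) = costOp p A') :=
  cost_decomposition_iff_spectral_reduction_general p p' hp
end

section
/- Let 0 < p ≤ p' < ∞ and let A be a Hermitian 3×3 complex matrix. Then there exist finitely many Hermitian 3×3 complex matrices B_1, …, B_K such that |A ⊗ₖ 1 − 1 ⊗ₖ Aᵀ|^p = Σ_{k=1}^K |B_k ⊗ₖ 1 − 1 ⊗ₖ B_kᵀ|^{p'}. (Consequently C_p(ℂ³) ⊆ C_{p'}(ℂ³) for p ≤ p'.) -/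
open Kronecker Matrix
open scoped ComplexOrder

/-- The triangle with vertices `(0, 0)`, `(s, R)`, `(z, 0)` has `ℓ^q` side lengths `x, y, z`. -/
theorem exists_triangle_in_lq_plane {q x y z : ℝ} (hq : 0 < q) (hx : 0 ≤ x) (hxz : x ≤ z)
    (hyz : y ≤ z) (hzxy : z ≤ x + y) :
    ∃ s R : ℝ, 0 ≤ s ∧ s ≤ z ∧ 0 ≤ R ∧
      s ^ q + R ^ q = x ^ q ∧ (z - s) ^ q + R ^ q = y ^ q := by
  have hy : 0 ≤ y := by linarith
  set F : ℝ → ℝ := fun s => x ^ q - s ^ q - y ^ q + (z - s) ^ q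
  have hF : Continuous F := by
    have := Real.continuous_rpow_const hq.le
    fun_prop
  have hF0 : 0 ≤ F 0 := by
    have : y ^ q ≤ z ^ q := Real.rpow_le_rpow hy hyz hq.le
    simp only [F, Real.zero_rpow hq.ne', sub_zero]
    linarith [Real.rpow_nonneg hx q]
  have hFx : F x ≤ 0 := by
    have : (z - x) ^ q ≤ y ^ q := Real.rpow_le_rpow (by linarith) (by linarith) hq.le
    simp only [F]
    linarith
  obtain ⟨s, ⟨hs0, hsx⟩, hFs⟩ := intermediate_value_Icc' hx hF.continuousOn ⟨hFx, hF0⟩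
  have hsq : s ^ q ≤ x ^ q := Real.rpow_le_rpow hs0 hsx hq.le
  refine ⟨s, (x ^ q - s ^ q) ^ q⁻¹, hs0, hsx.trans hxz, by positivity, ?_, ?_⟩
  all_goals
    rw [Real.rpow_inv_rpow (by linarith) hq.ne']
    simp only [F] at hFs
    linarith

theorem exists_abs_sub_rpow_eq_sum_of_monotone {p q : ℝ} (hp : 0 < p) (hpq : p ≤ q)
    {x : Fin 3 → ℝ} (hx : Monotone x) :
    ∃ g : Fin 2 → Fin 3 → ℝ, ∀ i j, |x i - x j| ^ p = ∑ k, |g k i - g k j| ^ q := by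
  have hq : 0 < q := hp.trans_le hpq
  have hpow : ∀ d : ℝ, 0 ≤ d → d ^ p = (d ^ (p / q)) ^ q := fun d hd => by
    rw [← Real.rpow_mul hd, div_mul_cancel₀ p hq.ne']
  have h01 : x 0 ≤ x 1 := hx (by decide)
  have h12 : x 1 ≤ x 2 := hx (by decide)
  have htriangle : (x 2 - x 0) ^ (p / q) ≤ (x 1 - x 0) ^ (p / q) + (x 2 - x 1) ^ (p / q) := by
    have := Real.rpow_add_le_add_rpow (sub_nonneg.2 h01) (sub_nonneg.2 h12)
      (p := p / q) (by positivity) ((div_le_one hq).2 hpq)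
    rwa [sub_add_sub_cancel'] at this
  obtain ⟨s, R, hs0, hsz, hR0, hsR, htR⟩ := exists_triangle_in_lq_plane hq (by positivity)
    (Real.rpow_le_rpow (by linarith) (by linarith) (by positivity))
    (Real.rpow_le_rpow (by linarith) (by linarith) (by positivity)) htriangle
  set z := (x 2 - x 0) ^ (p / q)
  refine ⟨![![0, s, z], ![0, R, 0]], fun i j => ?_⟩
  wlog hij : i ≤ j generalizing i j
  · simp only [abs_sub_comm (x i), abs_sub_comm (![![0, s, z], ![0, R, 0]] _ i)]
    exact this j i (le_of_not_ge hij)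
  rw [hpow _ (abs_nonneg _), abs_sub_comm, abs_of_nonneg (sub_nonneg.2 (hx hij))]
  fin_cases i <;> fin_cases j <;> revert hij <;>
    simp [abs_of_nonneg hs0, abs_of_nonneg hR0, abs_of_nonneg (hs0.trans hsz), abs_sub_comm s z,
      abs_of_nonneg (sub_nonneg.2 hsz), Real.zero_rpow hq.ne', Real.zero_rpow (div_pos hp hq).ne',
      hsR, htR, z]

theorem exists_abs_sub_rpow_eq_sum {p q : ℝ} (hp : 0 < p) (hpq : p ≤ q) (x : Fin 3 → ℝ) :
    ∃ g : Fin 2 → Fin 3 → ℝ, ∀ i j, |x i - x j| ^ p = ∑ k, |g k i - g k j| ^ q := by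
  obtain ⟨g, hg⟩ := exists_abs_sub_rpow_eq_sum_of_monotone hp hpq (Tuple.monotone_sort x)
  refine ⟨fun k => g k ∘ (Tuple.sort x).symm, fun i j => ?_⟩
  simpa using hg ((Tuple.sort x).symm i) ((Tuple.sort x).symm j)

theorem kronecker_mul_kronecker_mul_star {R l m : Type*} [CommSemiring R] [StarRing R]
    [Fintype l] [Fintype m]
    (U X : Matrix l l R) (V Y : Matrix m m R) :
    U ⊗ₖ V * X ⊗ₖ Y * star (U ⊗ₖ V) = (U * X * star U) ⊗ₖ (V * Y * star V) := by
  simp only [star_eq_conjTranspose, conjTranspose_kronecker, mul_kronecker_mul]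

theorem diagonal_kronecker_one_sub_one_kronecker_diagonal {R l m : Type*} [Ring R]
    [DecidableEq l] [DecidableEq m] (a : l → R) (b : m → R) :
    diagonal a ⊗ₖ (1 : Matrix m m R) - (1 : Matrix l l R) ⊗ₖ diagonal b =
      diagonal fun ij => a ij.1 - b ij.2 := by
  simp only [← diagonal_one, diagonal_kronecker_diagonal, diagonal_sub, mul_one, one_mul]

section RCLike

variable {𝕜 N : Type*} [RCLike 𝕜] [DecidableEq N]

theorem isHermitian_diagonal_ofReal (d : N → ℝ) :
    (diagonal (RCLike.ofReal ∘ d) : Matrix N N 𝕜).IsHermitian :=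
  isHermitian_diagonal_of_self_adjoint _ (by ext; simp)

variable [Fintype N]

theorem cfc_unitary_conj_diagonal_ofReal {U : Matrix N N 𝕜} (hU : U ∈ unitary (Matrix N N 𝕜))
    (d : N → ℝ) (f : ℝ → ℝ) :
    cfc f (U * diagonal (RCLike.ofReal ∘ d) * star U) =
      U * diagonal (RCLike.ofReal ∘ f ∘ d) * star U := by
  -- the spectrum is finite, so `f` agrees on it with an interpolating polynomial
  set P := Lagrange.interpolate (Finset.univ.image d) id f
  have hP : ∀ i, P.eval (d i) = f (d i) := fun i =>
    Lagrange.eval_interpolate_at_node _ (Set.injOn_id _)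
      (Finset.mem_image_of_mem d (Finset.mem_univ i))
  have hspec : spectrum ℝ (U * diagonal (RCLike.ofReal ∘ d) * star U) ⊆ Set.range d := by
    intro x hx
    rw [Unitary.spectrum_star_right_conjugate (U := ⟨U, hU⟩), ← spectrum.algebraMap_mem_iff 𝕜,
      spectrum_diagonal] at hx
    obtain ⟨i, hi⟩ := hx
    exact ⟨i, by simpa using hi⟩
  have hconj : ∀ X : Matrix N N 𝕜, U * X * star U = Unitary.conjStarAlgAut ℝ _ ⟨U, hU⟩ X :=
    fun _ => rfl
  rw [cfc_congr (g := P.eval) (fun x hx => by obtain ⟨i, rfl⟩ := hspec hx; exact (hP i).symm),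
    cfc_polynomial P _ ((isHermitian_diagonal_ofReal d).isSelfAdjoint.conjugate U), hconj,
    hconj, Polynomial.aeval_algHom_apply]
  congr 1
  change Polynomial.aeval (diagonalAlgHom ℝ (RCLike.ofReal ∘ d)) P = _
  rw [Polynomial.aeval_algHom_apply, Polynomial.aeval_pi_apply]
  ext i j
  simp [diagonal_apply, ← hP, Polynomial.aeval_algebraMap_apply]

theorem transpose_conj_diagonal_ofReal (U : Matrix N N 𝕜) (d : N → ℝ) :
    (U * diagonal (RCLike.ofReal ∘ d) * star U)ᵀ =
      (star U)ᵀ * diagonal (RCLike.ofReal ∘ d) * star (star U)ᵀ := by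
  rw [transpose_mul, transpose_mul, diagonal_transpose, ← mul_assoc,
    star_eq_conjTranspose (star U)ᵀ, conjTranspose_transpose_eq_transpose_conjTranspose,
    ← star_eq_conjTranspose, star_star]

theorem kronecker_transpose_star_mem_unitary {U : Matrix N N 𝕜}
    (hU : U ∈ unitary (Matrix N N 𝕜)) :
    U ⊗ₖ (star U)ᵀ ∈ unitary (Matrix (N × N) (N × N) 𝕜) :=
  kronecker_mem_unitary hU (transpose_mem_unitaryGroup_iff.2 (Unitary.star_mem hU))

theorem conj_diagonal_kronecker_one_sub_one_kronecker_transpose {U : Matrix N N 𝕜}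
    (hU : U ∈ unitary (Matrix N N 𝕜)) (d : N → ℝ) :
    (U * diagonal (RCLike.ofReal ∘ d) * star U) ⊗ₖ (1 : Matrix N N 𝕜) -
        (1 : Matrix N N 𝕜) ⊗ₖ (U * diagonal (RCLike.ofReal ∘ d) * star U)ᵀ =
      U ⊗ₖ (star U)ᵀ * diagonal (RCLike.ofReal ∘ fun ij => d ij.1 - d ij.2) *
        star (U ⊗ₖ (star U)ᵀ) := by
  have hUT : (star U)ᵀ ∈ unitary (Matrix N N 𝕜) :=
    transpose_mem_unitaryGroup_iff.2 (Unitary.star_mem hU)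
  have hdiag : (RCLike.ofReal ∘ fun ij : N × N => d ij.1 - d ij.2 : N × N → 𝕜) =
      fun ij => (RCLike.ofReal ∘ d) ij.1 - (RCLike.ofReal ∘ d) ij.2 := by
    ext; simp
  rw [hdiag, ← diagonal_kronecker_one_sub_one_kronecker_diagonal, mul_sub, sub_mul,
    kronecker_mul_kronecker_mul_star, kronecker_mul_kronecker_mul_star,
    transpose_conj_diagonal_ofReal, mul_one, mul_one,
    Unitary.mul_star_self_of_mem hU, Unitary.mul_star_self_of_mem hUT]

end RCLike

theorem costOp_conj_diagonal_ofReal {n : ℕ} {U : Matrix (Fin n) (Fin n) ℂ}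
    (hU : U ∈ unitary (Matrix (Fin n) (Fin n) ℂ)) (r : ℝ) (d : Fin n → ℝ) :
    costOp r (U * diagonal (RCLike.ofReal ∘ d) * star U) =
      U ⊗ₖ (star U)ᵀ * diagonal (RCLike.ofReal ∘ fun ij => |d ij.1 - d ij.2| ^ r) *
        star (U ⊗ₖ (star U)ᵀ) := by
  rw [costOp, conj_diagonal_kronecker_one_sub_one_kronecker_transpose hU,
    cfc_unitary_conj_diagonal_ofReal (kronecker_transpose_star_mem_unitary hU)]
  rfl

/-- For `0 < p ≤ p' < ∞`, every `p`-cost operator on `ℂ³` is a sum of `p'`-cost operators: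
`C_p(ℂ³) ⊆ C_{p'}(ℂ³)`. -/
theorem qutrit_cost_subset (p p' : ℝ) (hp : 0 < p) (hpp' : p ≤ p')
    (A : Matrix (Fin 3) (Fin 3) ℂ) (hA : A.IsHermitian) :
    ∃ (K : ℕ) (B : Fin K → Matrix (Fin 3) (Fin 3) ℂ),
      (∀ k, (B k).IsHermitian) ∧
      costOp p A = ∑ k, costOp p' (B k) := by
  obtain ⟨U, μ, hU, rfl⟩ : ∃ (U : Matrix (Fin 3) (Fin 3) ℂ) (μ : Fin 3 → ℝ),
      U ∈ unitary (Matrix (Fin 3) (Fin 3) ℂ) ∧ A = U * diagonal (RCLike.ofReal ∘ μ) * star U :=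
    ⟨_, _, hA.eigenvectorUnitary.2, by simpa using hA.spectral_theorem⟩
  obtain ⟨g, hg⟩ := exists_abs_sub_rpow_eq_sum hp hpp' μ
  refine ⟨2, fun k => U * diagonal (RCLike.ofReal ∘ g k) * star U,
    fun k => (isHermitian_diagonal_ofReal (g k)).isSelfAdjoint.conjugate U, ?_⟩
  simp only [costOp_conj_diagonal_ofReal hU, ← Finset.mul_sum, ← Finset.sum_mul,
    Fin.sum_univ_two, diagonal_add]
  congr 3
  ext ij
  simp [hg, Fin.sum_univ_two]
end

section
/- Let A_1, …, A_K be Hermitian n×n complex matrices, set C := Σ_{k=1}^K (A_k ⊗ₖ 1 − 1 ⊗ₖ A_kᵀ)² and T(α,β) := inf { Re trace(Π · C) : Π a coupling of α and β }. If ρ and ω are pure density matrices on ℂ^n (ρ·ρ = ρ and ω·ω = ω), then T(ρ,ω) − ½(T(ρ,ρ) + T(ω,ω)) = Σ_{k=1}^K (Re trace(ρ · A_k) − Re trace(ω · A_k))². (On pure states the squared quadratic Wasserstein divergence is the squared Euclidean distance of the vectors of expectation values.) -/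
open Kronecker Matrix
open scoped ComplexOrder

/-- A density matrix: positive semidefinite with unit trace. -/
def IsDensity {m : Type*} [Fintype m] (ρ : Matrix m m ℂ) : Prop :=
  ρ.PosSemidef ∧ ρ.trace = 1

/-- `P` is a coupling of the density matrices `ρ` and `ω`. -/
def IsCoupling {n : ℕ} (ρ ω : Matrix (Fin n) (Fin n) ℂ)
    (P : Matrix (Fin n × Fin n) (Fin n × Fin n) ℂ) : Prop :=
  IsDensity P ∧ ∀ B : Matrix (Fin n) (Fin n) ℂ,
    (P * (B ⊗ₖ (1 : Matrix (Fin n) (Fin n) ℂ))).trace = (ω * B).trace ∧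
    (P * ((1 : Matrix (Fin n) (Fin n) ℂ) ⊗ₖ Bᵀ)).trace = (ρ * B).trace

/-- The optimal transport cost between `α` and `β` for the cost operator `C`. -/
noncomputable def wcost {n : ℕ} (C : Matrix (Fin n × Fin n) (Fin n × Fin n) ℂ)
    (α β : Matrix (Fin n) (Fin n) ℂ) : ℝ :=
  sInf {x : ℝ | ∃ P, IsCoupling α β P ∧ x = (P * C).trace.re}

/-!
A positive semidefinite `P` with `tr (P E) = tr P` for an orthogonal projection `E` satisfies
`P E = P`. For a coupling `P` of pure states `ρ`, `ω` this applies to `E = ω ⊗ 1` and `E = 1 ⊗ ρᵀ`,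
so `P` is fixed by the rank-one projection `M = ω ⊗ ρᵀ`, and `P = M P M = tr (M P) • M = M`:
the product state is the only coupling. Its cost against `(A ⊗ 1 - 1 ⊗ Aᵀ)²` is
`tr (ω A²) + tr (ρ A²) - 2 tr (ω A) tr (ρ A)`, and the combination in the theorem leaves
`(tr (ρ A) - tr (ω A))²`.
-/

namespace Matrix

variable {m : Type*} [Fintype m]

open scoped MatrixOrder Matrix.Norms.L2Operator in
theorem PosSemidef.mul_eq_zero_of_trace_mul_eq_zero {𝕜 : Type*} [RCLike 𝕜] {P Q : Matrix m m 𝕜}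
    (hP : P.PosSemidef) (hQ : Q.IsHermitian) (hQQ : IsIdempotentElem Q)
    (h : (P * Q).trace = 0) : P * Q = 0 := by
  classical
  obtain ⟨B, rfl⟩ := CStarAlgebra.nonneg_iff_eq_star_mul_self.mp hP.nonneg
  -- `tr ((B Q)ᴴ (B Q)) = tr (Bᴴ B Q) = 0`
  have hBQ : B * Q = 0 := by
    rw [← trace_conjTranspose_mul_self_eq_zero_iff, conjTranspose_mul, hQ.eq, trace_mul_cycle,
      mul_assoc B, hQQ.eq, trace_mul_comm, ← mul_assoc, ← h]
    rfl
  rw [mul_assoc, hBQ, mul_zero]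

theorem PosSemidef.mul_eq_self_of_trace_mul_eq_trace {𝕜 : Type*} [RCLike 𝕜] [DecidableEq m]
    {P E : Matrix m m 𝕜} (hP : P.PosSemidef) (hE : E.IsHermitian) (hEE : IsIdempotentElem E)
    (h : (P * E).trace = P.trace) : P * E = P := by
  have hQ : (1 - E).IsHermitian := isHermitian_one.sub hE
  have := hP.mul_eq_zero_of_trace_mul_eq_zero hQ hEE.one_sub
    (by rw [mul_sub, mul_one, trace_sub, h, sub_self])
  rwa [mul_sub, mul_one, sub_eq_zero, eq_comm] at this

theorem exists_eq_vecMulVec_of_isIdempotentElem {K : Type*} [Field K] [CharZero K] [DecidableEq m]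
    {M : Matrix m m K} (hM : IsIdempotentElem M) (htr : M.trace = 1) :
    ∃ u c : m → K, M = vecMulVec u c := by
  -- the trace of an idempotent is the dimension of its range
  have hrank : Module.finrank K (LinearMap.range M.toLin') = 1 := by
    have := LinearMap.IsIdempotentElem.isProj_range _ (hM.map Matrix.toLinAlgEquiv') |>.trace
    change LinearMap.trace K _ M.toLin' = Module.finrank K (LinearMap.range M.toLin') at this
    rw [trace_toLin'_eq, htr] at this
    exact_mod_cast this.symm
  obtain ⟨u, hu⟩ := finrank_le_one_iff.mp hrank.le
  choose c hc using fun j => hu ⟨M *ᵥ Pi.single j 1, LinearMap.mem_range_self _ _⟩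
  refine ⟨u, c, ext fun i j => ?_⟩
  have := congr_arg (fun w : LinearMap.range M.toLin' => (w : m → K) i) (hc j)
  simpa [mulVec_single, vecMulVec_apply, mul_comm] using this.symm

theorem vecMulVec_mul_mul_vecMulVec {R : Type*} [CommSemiring R] (u c : m → R)
    (X : Matrix m m R) :
    vecMulVec u c * X * vecMulVec u c = (vecMulVec u c * X).trace • vecMulVec u c := by
  ext i j
  simp only [mul_apply, vecMulVec_apply, trace, diag, smul_apply, smul_eq_mul, Finset.sum_mul]
  exact Finset.sum_congr rfl fun k _ => Finset.sum_congr rfl fun l _ => by ring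

theorem mul_mul_eq_trace_mul_smul_of_isIdempotentElem {K : Type*} [Field K] [CharZero K]
    [DecidableEq m] {M : Matrix m m K} (hM : IsIdempotentElem M) (htr : M.trace = 1)
    (X : Matrix m m K) : M * X * M = (M * X).trace • M := by
  obtain ⟨u, c, rfl⟩ := exists_eq_vecMulVec_of_isIdempotentElem hM htr
  exact vecMulVec_mul_mul_vecMulVec u c X

theorem trace_kronecker_transpose_mul_sq {R : Type*} [CommRing R] [DecidableEq m]
    (ω ρ A : Matrix m m R) :
    ((ω ⊗ₖ ρᵀ) * (A ⊗ₖ 1 - 1 ⊗ₖ Aᵀ) ^ 2).trace =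
      (ω * A ^ 2).trace * ρ.trace + ω.trace * (ρ * A ^ 2).trace
        - 2 * ((ω * A).trace * (ρ * A).trace) := by
  have hsq : ∀ X Y : Matrix (m × m) (m × m) R, (X - Y) ^ 2 = X * X + Y * Y - X * Y - Y * X := by
    intro X Y
    noncomm_ring
  simp only [hsq, mul_add, mul_sub, trace_add, trace_sub, ← mul_kronecker_mul, trace_kronecker,
    mul_one, one_mul, ← transpose_mul, trace_transpose, sq]
  rw [trace_mul_comm (A * A) ρ, trace_mul_comm A ρ]
  ring

theorem IsHermitian.im_trace_mul_eq_zero {σ A : Matrix m m ℂ} (hσ : σ.IsHermitian)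
    (hA : A.IsHermitian) : (σ * A).trace.im = 0 := by
  refine Complex.conj_eq_iff_im.mp ?_
  rw [starRingEnd_apply, ← trace_conjTranspose, conjTranspose_mul, hσ.eq, hA.eq, trace_mul_comm]

end Matrix

namespace IsDensity

variable {m m' : Type*} [Fintype m] [Fintype m']

theorem kronecker {x : Matrix m m ℂ} {y : Matrix m' m' ℂ} (hx : IsDensity x) (hy : IsDensity y) :
    IsDensity (x ⊗ₖ y) :=
  ⟨hx.1.kronecker hy.1, by rw [trace_kronecker, hx.2, hy.2, mul_one]⟩

theorem transpose {x : Matrix m m ℂ} (hx : IsDensity x) : IsDensity xᵀ :=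
  ⟨hx.1.transpose, by rw [trace_transpose, hx.2]⟩

theorem re_trace_kronecker_transpose_mul_sq [DecidableEq m] {ω ρ A : Matrix m m ℂ}
    (hω : IsDensity ω) (hρ : IsDensity ρ) (hA : A.IsHermitian) :
    ((ω ⊗ₖ ρᵀ) * (A ⊗ₖ 1 - 1 ⊗ₖ Aᵀ) ^ 2).trace.re =
      (ω * A ^ 2).trace.re + (ρ * A ^ 2).trace.re - 2 * ((ω * A).trace.re * (ρ * A).trace.re) := by
  rw [trace_kronecker_transpose_mul_sq, hω.2, hρ.2]
  simp [Complex.mul_re, hω.1.isHermitian.im_trace_mul_eq_zero hA,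
    hρ.1.isHermitian.im_trace_mul_eq_zero hA]

end IsDensity

section Coupling

variable {n : ℕ} {ρ ω : Matrix (Fin n) (Fin n) ℂ}

theorem isCoupling_kronecker_transpose (hρ : IsDensity ρ) (hω : IsDensity ω) :
    IsCoupling ρ ω (ω ⊗ₖ ρᵀ) := by
  refine ⟨hω.kronecker hρ.transpose, fun B => ⟨?_, ?_⟩⟩
  · rw [← mul_kronecker_mul, mul_one, trace_kronecker, trace_transpose, hρ.2, mul_one]
  · rw [← mul_kronecker_mul, mul_one, trace_kronecker, hω.2, one_mul, ← transpose_mul,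
      trace_transpose, trace_mul_comm]

theorem IsCoupling.eq_kronecker_transpose {P : Matrix (Fin n × Fin n) (Fin n × Fin n) ℂ}
    (hP : IsCoupling ρ ω P) (hρ : IsDensity ρ) (hω : IsDensity ω) (hρρ : ρ * ρ = ρ)
    (hωω : ω * ω = ω) : P = ω ⊗ₖ ρᵀ := by
  set M := ω ⊗ₖ ρᵀ
  have hMdensity : IsDensity M := hω.kronecker hρ.transpose
  have hPω : P * (ω ⊗ₖ 1) = P := by
    refine hP.1.1.mul_eq_self_of_trace_mul_eq_trace ?_ ?_ ?_
    · rw [IsHermitian, conjTranspose_kronecker, hω.1.isHermitian.eq, conjTranspose_one]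
    · rw [IsIdempotentElem, ← mul_kronecker_mul, hωω, mul_one]
    · rw [(hP.2 ω).1, hωω, hω.2, hP.1.2]
  have hPρ : P * (1 ⊗ₖ ρᵀ) = P := by
    refine hP.1.1.mul_eq_self_of_trace_mul_eq_trace ?_ ?_ ?_
    · rw [IsHermitian, conjTranspose_kronecker, hρ.1.isHermitian.transpose.eq, conjTranspose_one]
    · rw [IsIdempotentElem, ← mul_kronecker_mul, ← transpose_mul, hρρ, mul_one]
    · rw [(hP.2 ρ).2, hρρ, hρ.2, hP.1.2]
  have hPM : P * M = P := by
    rw [show M = (ω ⊗ₖ 1) * (1 ⊗ₖ ρᵀ) by rw [← mul_kronecker_mul, mul_one, one_mul], ← mul_assoc,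
      hPω, hPρ]
  have hMP : M * P = P := by
    simpa only [conjTranspose_mul, hMdensity.1.isHermitian.eq, hP.1.1.isHermitian.eq] using
      congr_arg conjTranspose hPM
  have hMM : IsIdempotentElem M := by
    rw [IsIdempotentElem, ← mul_kronecker_mul, hωω, ← transpose_mul, hρρ]
  calc P = M * P * M := by rw [hMP, hPM]
    _ = (M * P).trace • M := mul_mul_eq_trace_mul_smul_of_isIdempotentElem hMM hMdensity.2 P
    _ = M := by rw [hMP, hP.1.2, one_smul]

theorem wcost_eq_of_pure (hρ : IsDensity ρ) (hω : IsDensity ω) (hρρ : ρ * ρ = ρ)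
    (hωω : ω * ω = ω) (C : Matrix (Fin n × Fin n) (Fin n × Fin n) ℂ) :
    wcost C ρ ω = ((ω ⊗ₖ ρᵀ) * C).trace.re := by
  have hcosts : {x : ℝ | ∃ P, IsCoupling ρ ω P ∧ x = (P * C).trace.re} =
      {((ω ⊗ₖ ρᵀ) * C).trace.re} := by
    ext x
    constructor
    · rintro ⟨P, hP, rfl⟩
      rw [hP.eq_kronecker_transpose hρ hω hρρ hωω, Set.mem_singleton_iff]
    · rintro rfl
      exact ⟨_, isCoupling_kronecker_transpose hρ hω, rfl⟩
  rw [wcost, hcosts, csInf_singleton]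

end Coupling

/-- On pure states the squared quadratic Wasserstein divergence is the squared Euclidean
distance of the vectors of expectation values. -/
theorem quad_div_on_pure_states {n : ℕ} (K : ℕ)
    (A : Fin K → Matrix (Fin n) (Fin n) ℂ) (hA : ∀ k, (A k).IsHermitian)
    (ρ ω : Matrix (Fin n) (Fin n) ℂ) (hρ : IsDensity ρ) (hω : IsDensity ω)
    (hρpure : ρ * ρ = ρ) (hωpure : ω * ω = ω) :
    wcost (∑ k, (A k ⊗ₖ (1 : Matrix (Fin n) (Fin n) ℂ) -
        (1 : Matrix (Fin n) (Fin n) ℂ) ⊗ₖ (A k)ᵀ) ^ 2) ρ ω -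
      (wcost (∑ k, (A k ⊗ₖ (1 : Matrix (Fin n) (Fin n) ℂ) -
          (1 : Matrix (Fin n) (Fin n) ℂ) ⊗ₖ (A k)ᵀ) ^ 2) ρ ρ +
        wcost (∑ k, (A k ⊗ₖ (1 : Matrix (Fin n) (Fin n) ℂ) -
          (1 : Matrix (Fin n) (Fin n) ℂ) ⊗ₖ (A k)ᵀ) ^ 2) ω ω) / 2 =
    ∑ k, ((ρ * A k).trace.re - (ω * A k).trace.re) ^ 2 := by
  rw [wcost_eq_of_pure hρ hω hρpure hωpure, wcost_eq_of_pure hρ hρ hρpure hρpure,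
    wcost_eq_of_pure hω hω hωpure hωpure]
  simp only [Matrix.mul_sum, trace_sum, Complex.re_sum]
  rw [← Finset.sum_add_distrib, Finset.sum_div, ← Finset.sum_sub_distrib]
  refine Finset.sum_congr rfl fun k _ => ?_
  rw [hω.re_trace_kronecker_transpose_mul_sq hρ (hA k),
    hρ.re_trace_kronecker_transpose_mul_sq hρ (hA k),
    hω.re_trace_kronecker_transpose_mul_sq hω (hA k)]
  ring
end
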